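/- arXiv:2505.04247 — 3 statements merged into one kernel-verified Lean document; each statement's English description precedes it below -/
import Mathlib

section
/- Let A be an invertible n×n real matrix, B an n×m real matrix, C an m×n real matrix, and D an m×m real matrix, and suppose the Schur complement S_A := D − C·A⁻¹·B is invertible. Then the right-preconditioned matrix M := (fromBlocks A B C D) * (fromBlocks A B 0 S_A)⁻¹ satisfies (M − 1)² = 0, where 1 denotes the identity matrix of size n+m. -/
open Matrix

theorem stmt_1 {n m : ℕ}
    (A : Matrix (Fin n) (Fin n) ℝ) (B : Matrix (Fin n) (Fin m) ℝ)
    (C : Matrix (Fin m) (Fin n) ℝ) (D : Matrix (Fin m) (Fin m) ℝ)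
    (hA : IsUnit A) (hS : IsUnit (D - C * A⁻¹ * B)) :
    ((fromBlocks A B C D) * (fromBlocks A B 0 (D - C * A⁻¹ * B))⁻¹ - 1) ^ 2 = 0 := by
  set S := D - C * A⁻¹ * B with hSdef
  have hAd : IsUnit A.det := (Matrix.isUnit_iff_isUnit_det A).mp hA
  have hSd : IsUnit S.det := (Matrix.isUnit_iff_isUnit_det S).mp hS
  have hAA : A * A⁻¹ = 1 := Matrix.mul_nonsing_inv A hAd
  have hSS : S * S⁻¹ = 1 := Matrix.mul_nonsing_inv S hSd
  have hU : (fromBlocks A B 0 S)⁻¹ = fromBlocks A⁻¹ (-(A⁻¹ * B * S⁻¹)) 0 S⁻¹ := by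
    apply Matrix.inv_eq_right_inv
    rw [Matrix.fromBlocks_multiply]
    simp [hAA, hSS, ← Matrix.fromBlocks_one]
    rw [← Matrix.mul_assoc, ← Matrix.mul_assoc, hAA, Matrix.one_mul, neg_add_cancel]
  rw [hU, Matrix.fromBlocks_multiply]
  have h2 : A * -(A⁻¹ * B * S⁻¹) + B * S⁻¹ = 0 := by
    rw [Matrix.mul_neg, ← Matrix.mul_assoc, ← Matrix.mul_assoc, hAA, Matrix.one_mul,
      neg_add_cancel]
  have h3 : C * -(A⁻¹ * B * S⁻¹) + D * S⁻¹ = 1 := by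
    rw [Matrix.mul_neg, ← Matrix.mul_assoc, ← Matrix.mul_assoc, neg_add_eq_sub,
      ← Matrix.sub_mul]
    exact hSS
  simp only [Matrix.mul_zero, add_zero, hAA, h2, h3]
  rw [← Matrix.fromBlocks_one, sq]
  ext i j
  rcases i with i | i <;> rcases j with j | j <;>
    simp [Matrix.sub_apply, Matrix.mul_apply, Matrix.fromBlocks]
end

section
/- Let λ, u, g be real numbers and let c > 0. Then λ + max(0, −λ − c·(u − g)) = 0 if and only if u − g ≥ 0, λ ≤ 0, and λ·(u − g) = 0. -/
theorem stmt_11 (lam u g c : ℝ) (hc : 0 < c) :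
    lam + max 0 (-lam - c * (u - g)) = 0 ↔
      (u - g ≥ 0 ∧ lam ≤ 0 ∧ lam * (u - g) = 0) := by
  rcases le_total (-lam - c * (u - g)) 0 with h | h
  · rw [max_eq_left h]
    constructor
    · intro h0
      rw [add_zero] at h0
      subst h0
      simp only [neg_zero, zero_sub, neg_nonpos] at h
      exact ⟨nonneg_of_mul_nonneg_right (by linarith) hc, le_refl 0, by ring⟩
    · rintro ⟨h1, h2, h3⟩
      nlinarith
  · rw [max_eq_right h]
    constructor
    · intro h0
      have hue : u - g ≤ 0 := by nlinarith
      constructor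
      · nlinarith
      · constructor <;> nlinarith
    · rintro ⟨h1, h2, h3⟩
      nlinarith
end

section
/- Let λ and u be vectors in the Euclidean space ℝⁿ (with the Euclidean norm ‖·‖), and let b > 0 and c > 0 be real constants. Then −max(b, ‖λ + c•u‖) • λ + b • (λ + c•u) = 0 if and only if the following three conditions hold: ‖λ‖ ≤ b; if ‖λ‖ < b then u = 0; and if u ≠ 0 then ‖λ‖ = b and there exists ζ > 0 with u = ζ • λ. -/
theorem stmt_12 {n : ℕ} (lam u : EuclideanSpace ℝ (Fin n))
    (b c : ℝ) (hb : 0 < b) (hc : 0 < c) :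
    -(max b ‖lam + c • u‖) • lam + b • (lam + c • u) = 0 ↔
      (‖lam‖ ≤ b ∧ (‖lam‖ < b → u = 0) ∧
        (u ≠ 0 → ‖lam‖ = b ∧ ∃ ζ : ℝ, 0 < ζ ∧ u = ζ • lam)) := by
  set v := lam + c • u with hv
  set m := max b ‖v‖ with hm
  have hbm : b ≤ m := le_max_left _ _
  have hm0 : 0 < m := lt_of_lt_of_le hb hbm
  constructor
  · intro h
    have key : b • v = m • lam := by
      rw [neg_smul, add_comm, ← sub_eq_add_neg, sub_eq_zero] at h
      exact h
    by_cases hu : u = 0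
    · subst hu
      have hvl : v = lam := by simp [hv]
      rw [hvl] at key hm
      have hlb : ‖lam‖ ≤ b := by
        by_contra hgt
        push_neg at hgt
        have hmb : m = ‖lam‖ := hm.trans (max_eq_right hgt.le)
        rw [hmb] at key
        have : (b - ‖lam‖) • lam = 0 := by
          rw [sub_smul, key, sub_self]
        rcases smul_eq_zero.mp this with h1 | h1
        · exact absurd (sub_eq_zero.mp h1) (by linarith)
        · rw [h1] at hgt; simp at hgt; linarith
      exact ⟨hlb, fun _ => rfl, fun hne => absurd rfl hne⟩
    · have hvb : b < ‖v‖ := by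
        by_contra hle
        push_neg at hle
        have hmb : m = b := max_eq_left hle
        rw [hmb] at key
        have hveq : v = lam := smul_right_injective _ hb.ne' key
        have h0 : lam + c • u = lam := hv.symm.trans hveq
        have : c • u = 0 := by simpa using h0
        rcases smul_eq_zero.mp this with h1 | h1
        · exact absurd h1 hc.ne'
        · exact hu h1
      have hmv : m = ‖v‖ := max_eq_right hvb.le
      have hv0 : (0:ℝ) < ‖v‖ := lt_trans hb hvb
      have hn : b * ‖v‖ = m * ‖lam‖ := by
        have := congrArg norm key
        rwa [norm_smul, norm_smul, Real.norm_eq_abs, Real.norm_eq_abs,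
          abs_of_pos hb, abs_of_pos hm0] at this
      have hlb : ‖lam‖ = b := by
        rw [hmv] at hn
        have h' : ‖v‖ * ‖lam‖ = ‖v‖ * b := by rw [← hn]; ring
        exact mul_left_cancel₀ hv0.ne' h'
      have kuz : (b * c) • u = (‖v‖ - b) • lam := by
        rw [hmv, hv, smul_add, smul_smul] at key
        have : (b * c) • u = ‖v‖ • lam - b • lam := by
          rw [← key]; abel
        rw [this, sub_smul]
      have hζ : u = ((‖v‖ - b) / (b * c)) • lam := by
        have hbc : b * c ≠ 0 := by positivity
        rw [div_eq_inv_mul, mul_smul, ← kuz, smul_smul, inv_mul_cancel₀ hbc, one_smul]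
      refine ⟨hlb.le, fun hlt => absurd hlb (ne_of_lt hlt), fun _ => ⟨hlb, (‖v‖ - b) / (b * c), ?_, hζ⟩⟩
      apply div_pos (by linarith) (by positivity)
  · rintro ⟨h1, h2, h3⟩
    by_cases hu : u = 0
    · subst hu
      have hvl : v = lam := by simp [hv]
      have hmb : m = b := by rw [hm, hvl]; exact max_eq_left h1
      rw [hvl, hmb, neg_smul]
      abel
    · obtain ⟨hlb, ζ, hζ, huz⟩ := h3 hu
      have hveq : v = (1 + c * ζ) • lam := by
        rw [hv, huz, smul_smul, add_smul, one_smul]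
      have hcz : (0:ℝ) < 1 + c * ζ := by nlinarith
      have hnv : ‖v‖ = (1 + c * ζ) * b := by
        rw [hveq, norm_smul, Real.norm_eq_abs, abs_of_pos hcz, hlb]
      have hmb : m = (1 + c * ζ) * b := by
        rw [hm, hnv]
        apply max_eq_right
        nlinarith [mul_pos (mul_pos hc hζ) hb]
      rw [hmb, hveq, smul_smul, neg_smul]
      rw [show b * (1 + c * ζ) = (1 + c * ζ) * b from mul_comm _ _]
      abel
end
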